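/- Let μ_k be finite Radon measures on a compact metric space D converging weakly to μ, and y ↦ A_y a continuous family of convex bodies in ℝ^n. Then the Minkowski integrals ∫_D A_y dμ_k(y) converge to ∫_D A_y dμ(y) in the Hausdorff metric. -/

import Mathlib

open MeasureTheory Metric Set Filter
open scoped RealInnerProductSpace NNReal ENNReal Pointwise Topology

/-- The support function of a set `A ⊆ ℝⁿ`: `h_A(ξ) = sup_{ζ ∈ A} ⟨ζ, ξ⟩`. -/
noncomputable def suppFn {n : ℕ} (A : Set (EuclideanSpace ℝ (Fin n)))
    (ξ : EuclideanSpace ℝ (Fin n)) : ℝ :=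
  sSup ((fun ζ => ⟪ζ, ξ⟫) '' A)

/-!
The support functions `h_k = h_{K_k}` converge pointwise to `h_K`, since `y ↦ h_{A_y}(ξ)` is
continuous (support functions are `‖ξ‖`-Lipschitz in the Hausdorff metric). All `A_y` lie in a
common ball of radius `R` and the total masses `μ_k(D)` are bounded by some `B`, so every `K_k`
lies in the ball of radius `R B` and the `h_k` are uniformly `R B`-Lipschitz. Pointwise
convergence of an equicontinuous family is uniform on the unit ball, and the Hausdorff distance
of two convex bodies is at most the sup-distance of their support functions on the unit ball.
-/

theorem IsCompact.tendstoUniformlyOn_of_tendsto_of_lipschitzWith {X α ι : Type*}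
    [PseudoMetricSpace X] [PseudoMetricSpace α] {s : Set X} (hs : IsCompact s) {l : Filter ι}
    {F : ι → X → α} {f : X → α} {M : ℝ≥0} (hF : ∀ i, LipschitzWith M (F i))
    (h : ∀ x, Tendsto (fun i => F i x) l (𝓝 (f x))) : TendstoUniformlyOn F f l s := by
  have hcont : Equicontinuous F :=
    Metric.equicontinuous_of_continuity_modulus (fun t => M * t)
      (by simpa using (continuous_const_mul (M : ℝ)).tendsto 0) F
      fun x y i => (hF i).dist_le_mul x y
  have hunif := (EquicontinuousOn.tendsto_uniformOnFun_iff_pi (𝔖 := {K | IsCompact K})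
    (fun _ hK => hK) (sUnion_eq_univ_iff.2 fun x => ⟨{x}, isCompact_singleton, rfl⟩)
    (fun K _ => hcont.equicontinuousOn K) l f).2 (tendsto_pi_nhds.2 h)
  exact UniformOnFun.tendsto_iff_tendstoUniformlyOn.1 hunif s hs

namespace ConvexBody

variable {V : Type*} [NormedAddCommGroup V] [NormedSpace ℝ V]

theorem norm_le_dist_zero {K : ConvexBody V} {x : V} (hx : x ∈ K) : ‖x‖ ≤ dist K 0 := by
  have h := infDist_le_hausdorffDist_of_mem hx (hausdorffEDist_ne_top (L := 0))
  rwa [hausdorffDist_coe, coe_zero, ← singleton_zero, infDist_singleton, dist_zero_right] at h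

theorem exists_subset_closedBall_of_isBounded {ι : Type*} {A : ι → ConvexBody V}
    (hA : Bornology.IsBounded (range A)) : ∃ R : ℝ≥0, ∀ i, (A i : Set V) ⊆ closedBall 0 R := by
  obtain ⟨r, hr⟩ := hA.subset_closedBall 0
  refine ⟨r.toNNReal, fun i x hx => mem_closedBall_zero_iff.2 ?_⟩
  exact (norm_le_dist_zero hx).trans <| (mem_closedBall.1 (hr (mem_range_self i))).trans <|
    r.le_coe_toNNReal

end ConvexBody

section SupportFunction

variable {n : ℕ} {A : Set (EuclideanSpace ℝ (Fin n))} {x ξ η : EuclideanSpace ℝ (Fin n)}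
  {R c : ℝ}

theorem inner_le_suppFn (hA : Bornology.IsBounded A) (hx : x ∈ A) (ξ : EuclideanSpace ℝ (Fin n)) :
    ⟪x, ξ⟫ ≤ suppFn A ξ :=
  have hinner : (fun ζ => ⟪ζ, ξ⟫) = innerSL ℝ ξ := funext fun ζ => real_inner_comm ξ ζ
  le_csSup (hinner ▸ ((innerSL ℝ ξ).lipschitz.isBounded_image hA).bddAbove) ⟨x, hx, rfl⟩

theorem suppFn_le (hA : A.Nonempty) (h : ∀ x ∈ A, ⟪x, ξ⟫ ≤ c) : suppFn A ξ ≤ c :=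
  csSup_le (hA.image _) (forall_mem_image.2 h)

theorem abs_suppFn_le (hA : A.Nonempty) (hR : A ⊆ closedBall 0 R) (ξ : EuclideanSpace ℝ (Fin n)) :
    |suppFn A ξ| ≤ R * ‖ξ‖ := by
  have hnorm : ∀ x ∈ A, |⟪x, ξ⟫| ≤ R * ‖ξ‖ := fun x hx =>
    (abs_real_inner_le_norm x ξ).trans <|
      mul_le_mul_of_nonneg_right (mem_closedBall_zero_iff.1 (hR hx)) (norm_nonneg ξ)
  obtain ⟨x, hx⟩ := hA
  refine abs_le.2 ⟨?_, suppFn_le ⟨x, hx⟩ fun y hy => (le_abs_self _).trans (hnorm y hy)⟩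
  exact (neg_le_of_abs_le (hnorm x hx)).trans
    (inner_le_suppFn (isBounded_closedBall.subset hR) hx ξ)

theorem suppFn_le_suppFn_add (hA : A.Nonempty) (hR : A ⊆ closedBall 0 R)
    (ξ η : EuclideanSpace ℝ (Fin n)) : suppFn A ξ ≤ suppFn A η + R * ‖ξ - η‖ := by
  refine suppFn_le hA fun x hx => ?_
  calc ⟪x, ξ⟫ = ⟪x, η⟫ + ⟪x, ξ - η⟫ := by rw [inner_sub_right]; ring
    _ ≤ suppFn A η + ‖x‖ * ‖ξ - η‖ :=
      add_le_add (inner_le_suppFn (isBounded_closedBall.subset hR) hx η)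
        (real_inner_le_norm x _)
    _ ≤ suppFn A η + R * ‖ξ - η‖ := by
      gcongr
      exact mem_closedBall_zero_iff.1 (hR hx)

theorem lipschitzWith_suppFn {R : ℝ≥0} (hA : A.Nonempty) (hR : A ⊆ closedBall 0 R) :
    LipschitzWith R (suppFn A) := by
  refine LipschitzWith.of_dist_le_mul fun ξ η => ?_
  rw [Real.dist_eq, dist_eq_norm, abs_sub_le_iff]
  have h := suppFn_le_suppFn_add hA hR η ξ
  rw [norm_sub_rev] at h
  exact ⟨by linarith [suppFn_le_suppFn_add hA hR ξ η], by linarith⟩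

theorem subset_closedBall_of_suppFn_le (hA : Bornology.IsBounded A) (hR : 0 ≤ R)
    (h : ∀ ξ, suppFn A ξ ≤ R * ‖ξ‖) : A ⊆ closedBall 0 R := by
  intro x hx
  rw [mem_closedBall_zero_iff]
  have hsq : ‖x‖ * ‖x‖ ≤ R * ‖x‖ := by
    simpa only [real_inner_self_eq_norm_mul_norm] using (inner_le_suppFn hA hx x).trans (h x)
  rcases (norm_nonneg x).eq_or_lt with hx0 | hx0
  · exact hx0 ▸ hR
  · exact le_of_mul_le_mul_right hsq hx0

end SupportFunction

section ConvexBodySupportFunction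

variable {n : ℕ}

theorem suppFn_le_suppFn_add_dist_mul (K L : ConvexBody (EuclideanSpace ℝ (Fin n)))
    (ξ : EuclideanSpace ℝ (Fin n)) : suppFn K ξ ≤ suppFn L ξ + dist K L * ‖ξ‖ := by
  refine suppFn_le K.nonempty fun x hx => ?_
  obtain ⟨z, hz, hxz⟩ := L.isCompact.exists_infDist_eq_dist L.nonempty x
  have hdist : ‖x - z‖ ≤ dist K L := by
    rw [← dist_eq_norm, ← hxz, ← ConvexBody.hausdorffDist_coe]
    exact infDist_le_hausdorffDist_of_mem hx ConvexBody.hausdorffEDist_ne_top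
  calc ⟪x, ξ⟫ = ⟪z, ξ⟫ + ⟪x - z, ξ⟫ := by rw [inner_sub_left]; ring
    _ ≤ suppFn L ξ + ‖x - z‖ * ‖ξ‖ :=
      add_le_add (inner_le_suppFn L.isBounded hz ξ) (real_inner_le_norm _ _)
    _ ≤ suppFn L ξ + dist K L * ‖ξ‖ := by gcongr

theorem lipschitzWith_suppFn_apply (ξ : EuclideanSpace ℝ (Fin n)) :
    LipschitzWith ‖ξ‖₊ fun K : ConvexBody (EuclideanSpace ℝ (Fin n)) => suppFn K ξ := by
  refine LipschitzWith.of_dist_le_mul fun K L => ?_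
  have hKL := suppFn_le_suppFn_add_dist_mul K L ξ
  have hLK := suppFn_le_suppFn_add_dist_mul L K ξ
  rw [dist_comm] at hLK
  rw [Real.dist_eq, coe_nnnorm, abs_sub_le_iff]
  constructor <;> linarith

/-- The nearest-point projection `z` of `x` onto `L` is separated from `x` by the hyperplane
orthogonal to `x - z`, so testing the hypothesis on `ξ = (x - z) / ‖x - z‖` bounds `‖x - z‖`. -/
theorem infDist_le_of_inner_le_suppFn_add (L : ConvexBody (EuclideanSpace ℝ (Fin n)))
    {x : EuclideanSpace ℝ (Fin n)} {ε : ℝ}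
    (h : ∀ ξ ∈ closedBall (0 : EuclideanSpace ℝ (Fin n)) 1, ⟪x, ξ⟫ ≤ suppFn L ξ + ε) :
    infDist x L ≤ ε := by
  obtain ⟨z, hz, hz_min⟩ :=
    exists_norm_eq_iInf_of_complete_convex L.nonempty L.isClosed.isComplete L.convex x
  have hproj := (norm_eq_iInf_iff_real_inner_le_zero L.convex hz).1 hz_min
  set ξ := ‖x - z‖⁻¹ • (x - z)
  have hξ : ξ ∈ closedBall (0 : EuclideanSpace ℝ (Fin n)) 1 := by
    rw [mem_closedBall_zero_iff, norm_smul, norm_inv, norm_norm]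
    exact inv_mul_le_one_of_le₀ le_rfl (norm_nonneg _)
  have hL : suppFn L ξ ≤ ⟪z, ξ⟫ := by
    refine suppFn_le L.nonempty fun w hw => ?_
    have hwz : ⟪w - z, ξ⟫ ≤ 0 := by
      rw [real_inner_smul_right, real_inner_comm]
      exact mul_nonpos_of_nonneg_of_nonpos (by positivity) (hproj w hw)
    rw [inner_sub_left] at hwz
    linarith
  have hxz : ⟪x, ξ⟫ - ⟪z, ξ⟫ = ‖x - z‖ := by
    rw [← inner_sub_left, real_inner_smul_right, real_inner_self_eq_norm_sq]
    rcases eq_or_ne ‖x - z‖ 0 with h0 | h0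
    · simp [h0]
    · field_simp
  calc infDist x L ≤ dist x z := infDist_le_dist_of_mem hz
    _ = ‖x - z‖ := dist_eq_norm x z
    _ ≤ ε := by linarith [h ξ hξ]

theorem ConvexBody.dist_le_of_abs_suppFn_sub_le (K L : ConvexBody (EuclideanSpace ℝ (Fin n)))
    {ε : ℝ} (hε : 0 ≤ ε)
    (h : ∀ ξ ∈ closedBall (0 : EuclideanSpace ℝ (Fin n)) 1, |suppFn K ξ - suppFn L ξ| ≤ ε) :
    dist K L ≤ ε := by
  rw [← ConvexBody.hausdorffDist_coe]
  refine hausdorffDist_le_of_infDist hε (fun x hx => ?_) fun x hx => ?_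
  · refine infDist_le_of_inner_le_suppFn_add L fun ξ hξ => ?_
    linarith [inner_le_suppFn K.isBounded hx ξ, (abs_le.1 (h ξ hξ)).2]
  · refine infDist_le_of_inner_le_suppFn_add K fun ξ hξ => ?_
    linarith [inner_le_suppFn L.isBounded hx ξ, (abs_le.1 (h ξ hξ)).1]

theorem ConvexBody.tendsto_of_tendstoUniformlyOn_suppFn {ι : Type*} {l : Filter ι}
    {K : ι → ConvexBody (EuclideanSpace ℝ (Fin n))} {L : ConvexBody (EuclideanSpace ℝ (Fin n))}
    (h : TendstoUniformlyOn (fun i => suppFn (K i)) (suppFn (L : Set (EuclideanSpace ℝ (Fin n))))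
      l (closedBall 0 1)) :
    Tendsto K l (𝓝 L) := by
  refine Metric.tendsto_nhds.2 fun ε hε => ?_
  filter_upwards [Metric.tendstoUniformlyOn_iff.1 h (ε / 2) (half_pos hε)] with i hi
  refine (ConvexBody.dist_le_of_abs_suppFn_sub_le _ _ (half_pos hε).le fun ξ hξ => ?_).trans_lt
    (half_lt_self hε)
  rw [abs_sub_comm]
  exact (hi ξ hξ).le

theorem subset_closedBall_of_suppFn_eq_integral {D : Type*} [MeasurableSpace D] (ν : Measure D)
    [IsFiniteMeasure ν] {A : D → ConvexBody (EuclideanSpace ℝ (Fin n))} {R : ℝ≥0}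
    (hR : ∀ y, (A y : Set (EuclideanSpace ℝ (Fin n))) ⊆ closedBall 0 R)
    {K : ConvexBody (EuclideanSpace ℝ (Fin n))}
    (hK : ∀ ξ, suppFn (K : Set (EuclideanSpace ℝ (Fin n))) ξ = ∫ y, suppFn (A y) ξ ∂ν) :
    (K : Set (EuclideanSpace ℝ (Fin n))) ⊆ closedBall 0 (R * ν.real univ) := by
  refine subset_closedBall_of_suppFn_le K.isBounded (by positivity) fun ξ => ?_
  have hbound : ‖∫ y, suppFn (A y) ξ ∂ν‖ ≤ R * ‖ξ‖ * ν.real univ :=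
    norm_integral_le_of_norm_le_const <| .of_forall fun y =>
      (Real.norm_eq_abs _).trans_le (abs_suppFn_le (A y).nonempty (hR y) ξ)
  rw [hK, mul_right_comm]
  exact (Real.le_norm_self _).trans hbound

end ConvexBodySupportFunction

theorem minkowski_integral_weak_convergence_general {n : ℕ} {D : Type*} [MetricSpace D]
    [CompactSpace D] [MeasurableSpace D]
    (μseq : ℕ → Measure D) (μ : Measure D)
    [∀ k, IsFiniteMeasure (μseq k)]
    (hweak : ∀ f : C(D, ℝ), Tendsto (fun k => ∫ y, f y ∂(μseq k)) atTop (𝓝 (∫ y, f y ∂μ)))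
    (A : D → ConvexBody (EuclideanSpace ℝ (Fin n))) (hA : Continuous A)
    (Kseq : ℕ → ConvexBody (EuclideanSpace ℝ (Fin n)))
    (K : ConvexBody (EuclideanSpace ℝ (Fin n)))
    (hKseq : ∀ k ξ, suppFn (Kseq k : Set (EuclideanSpace ℝ (Fin n))) ξ
      = ∫ y, suppFn (A y : Set (EuclideanSpace ℝ (Fin n))) ξ ∂(μseq k))
    (hK : ∀ ξ, suppFn (K : Set (EuclideanSpace ℝ (Fin n))) ξ
      = ∫ y, suppFn (A y : Set (EuclideanSpace ℝ (Fin n))) ξ ∂μ) :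
    Tendsto Kseq atTop (𝓝 K) := by
  obtain ⟨R, hR⟩ := ConvexBody.exists_subset_closedBall_of_isBounded (isCompact_range hA).isBounded
  have hmass : Tendsto (fun k => (μseq k).real univ) atTop (𝓝 (μ.real univ)) := by
    simpa using hweak 1
  obtain ⟨B, hB⟩ := hmass.bddAbove_range
  have hKseq_subset : ∀ k, (Kseq k : Set (EuclideanSpace ℝ (Fin n))) ⊆
      closedBall 0 ((R * B.toNNReal : ℝ≥0) : ℝ) := fun k =>
    (subset_closedBall_of_suppFn_eq_integral (μseq k) hR (hKseq k)).trans <|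
      closedBall_subset_closedBall <| by
        push_cast
        gcongr
        exact (hB (mem_range_self k)).trans B.le_coe_toNNReal
  have hpointwise : ∀ ξ, Tendsto (fun k => suppFn (Kseq k : Set (EuclideanSpace ℝ (Fin n))) ξ)
      atTop (𝓝 (suppFn (K : Set (EuclideanSpace ℝ (Fin n))) ξ)) := fun ξ => by
    simp_rw [hKseq, hK]
    exact hweak ⟨fun y => suppFn (A y : Set (EuclideanSpace ℝ (Fin n))) ξ,
      (lipschitzWith_suppFn_apply ξ).continuous.comp hA⟩
  exact ConvexBody.tendsto_of_tendstoUniformlyOn_suppFn <|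
    (isCompact_closedBall 0 1).tendstoUniformlyOn_of_tendsto_of_lipschitzWith
      (fun k => lipschitzWith_suppFn (Kseq k).nonempty (hKseq_subset k)) hpointwise

/-- If finite Radon measures `μ k` converge weakly to `μ`, then the Minkowski integrals
`∫ A_y dμ_k(y)` converge to `∫ A_y dμ(y)` in the Hausdorff metric. -/
theorem minkowski_integral_weak_convergence {n : ℕ} {D : Type*} [MetricSpace D]
    [CompactSpace D] [MeasurableSpace D] [BorelSpace D]
    (μseq : ℕ → Measure D) (μ : Measure D)
    [∀ k, IsFiniteMeasure (μseq k)] [IsFiniteMeasure μ]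
    (hweak : ∀ f : C(D, ℝ), Tendsto (fun k => ∫ y, f y ∂(μseq k)) atTop (𝓝 (∫ y, f y ∂μ)))
    (A : D → ConvexBody (EuclideanSpace ℝ (Fin n))) (hA : Continuous A)
    (Kseq : ℕ → ConvexBody (EuclideanSpace ℝ (Fin n)))
    (K : ConvexBody (EuclideanSpace ℝ (Fin n)))
    (hKseq : ∀ k ξ, suppFn (Kseq k : Set (EuclideanSpace ℝ (Fin n))) ξ
      = ∫ y, suppFn (A y : Set (EuclideanSpace ℝ (Fin n))) ξ ∂(μseq k))
    (hK : ∀ ξ, suppFn (K : Set (EuclideanSpace ℝ (Fin n))) ξ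
      = ∫ y, suppFn (A y : Set (EuclideanSpace ℝ (Fin n))) ξ ∂μ) :
    Tendsto Kseq atTop (𝓝 K) :=
  minkowski_integral_weak_convergence_general μseq μ hweak A hA Kseq K hKseq hK
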